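/- Let φ, Φ ∈ ℂ with Φ ≠ −φ, Φ ≠ φ, and A a bounded linear operator on a complex Hilbert space such that (A* − conj(φ)I)(ΦI − A) is self-adjoint and positive (≥ 0 in the operator order). Then ‖A‖ − w(A) ≤ |Φ − φ|²/(4|Φ + φ|). -/

import Mathlib

/-!
Expanding the positivity hypothesis at a unit vector `x` gives
`‖A x‖² + Re(conj Φ φ) ≤ Re((Φ + φ)⟪A x, x⟫) ≤ |Φ + φ| w(A)`, hence
`‖A‖² ≤ |Φ + φ| w(A) - Re(conj Φ φ)`. With `c = |Φ + φ| > 0`, the inequality `4c‖A‖ - 4‖A‖² ≤ c²`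
and `|Φ - φ|² = c² - 4 Re(conj Φ φ)` then give `4c (‖A‖ - w(A)) ≤ |Φ - φ|²`.
-/

noncomputable def numRadius {H : Type*} [NormedAddCommGroup H] [InnerProductSpace ℂ H]
    (T : H →L[ℂ] H) : ℝ :=
  sSup {r : ℝ | ∃ x : H, ‖x‖ = 1 ∧ r = ‖(inner ℂ (T x) x : ℂ)‖}

open ComplexConjugate

section NumRadius

variable {H : Type*} [NormedAddCommGroup H] [InnerProductSpace ℂ H] (T : H →L[ℂ] H)

theorem numRadius_nonneg : 0 ≤ numRadius T :=
  Real.sSup_nonneg fun _ ⟨_, _, hr⟩ ↦ hr ▸ norm_nonneg _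

theorem norm_inner_le_numRadius {x : H} (hx : ‖x‖ = 1) :
    ‖(inner ℂ (T x) x : ℂ)‖ ≤ numRadius T := by
  refine le_csSup ⟨‖T‖, ?_⟩ ⟨x, hx, rfl⟩
  rintro r ⟨y, hy, rfl⟩
  calc ‖(inner ℂ (T y) y : ℂ)‖ ≤ ‖T y‖ * ‖y‖ := norm_inner_le_norm _ _
    _ ≤ ‖T‖ := by simpa [hy] using T.le_opNorm_of_le hy.le

end NumRadius

theorem ContinuousLinearMap.opNorm_sq_le_of_unit_norm_sq {𝕜 E F : Type*} [RCLike 𝕜]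
    [NormedAddCommGroup E] [NormedSpace 𝕜 E] [Nontrivial E] [NormedAddCommGroup F]
    [NormedSpace 𝕜 F] {f : E →L[𝕜] F} {M : ℝ} (hf : ∀ x, ‖x‖ = 1 → ‖f x‖ ^ 2 ≤ M) :
    ‖f‖ ^ 2 ≤ M := by
  obtain ⟨x, hx⟩ := exists_ne (0 : E)
  have hM : 0 ≤ M := (sq_nonneg _).trans (hf _ (norm_smul_inv_norm (𝕜 := 𝕜) hx))
  have : ‖f‖ ≤ √M := opNorm_le_of_unit_norm (Real.sqrt_nonneg M) fun x hx ↦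
    Real.le_sqrt_of_sq_le (hf x hx)
  exact (Real.le_sqrt (norm_nonneg f) hM).1 this

theorem Complex.norm_sub_sq_eq_norm_add_sq_sub (z w : ℂ) :
    ‖z - w‖ ^ 2 = ‖z + w‖ ^ 2 - 4 * (conj z * w).re := by
  rw [Complex.sq_norm, Complex.sq_norm]
  simp only [Complex.normSq_apply, Complex.mul_re, Complex.conj_re, Complex.conj_im,
      Complex.add_re, Complex.add_im, Complex.sub_re, Complex.sub_im]
  ring

theorem sub_le_of_sq_le_mul_sub {a w c d : ℝ} (hc : 0 < c) (h : a ^ 2 ≤ c * w - d) :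
    a - w ≤ (c ^ 2 - 4 * d) / (4 * c) := by
  rw [le_div_iff₀ (by positivity)]
  nlinarith [sq_nonneg (c - 2 * a)]

section PositiveProduct

open ContinuousLinearMap

variable {H : Type*} [NormedAddCommGroup H] [InnerProductSpace ℂ H] [CompleteSpace H]
  (A : H →L[ℂ] H) (phi Phi : ℂ)

theorem re_inner_adjoint_sub_comp_sub_apply_self (x : H) :
    (inner ℂ (((adjoint A - conj phi • (1 : H →L[ℂ] H)) ∘L (Phi • (1 : H →L[ℂ] H) - A)) x) x).re
      = ((Phi + phi) * inner ℂ (A x) x).re - ‖A x‖ ^ 2 - (conj Phi * phi).re * ‖x‖ ^ 2 := by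
  have hadj : adjoint A - conj phi • (1 : H →L[ℂ] H) = adjoint (A - phi • 1) := by
    simp [← star_eq_adjoint, star_smul]
  rw [comp_apply, hadj, adjoint_inner_left]
  simp only [sub_apply, smul_apply, one_apply_eq_self, inner_sub_left, inner_sub_right,
    inner_smul_left, inner_smul_right, inner_self_eq_norm_sq_to_K, ← inner_conj_symm x (A x)]
  simp only [Complex.coe_algebraMap, ← Complex.ofReal_pow, Complex.sub_re, Complex.sub_im,
    Complex.mul_re, Complex.mul_im, Complex.add_re, Complex.add_im, Complex.conj_re,
    Complex.conj_im, Complex.ofReal_re, Complex.ofReal_im]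
  ring

theorem opNorm_sq_le_of_re_inner_adjoint_sub_comp_sub_nonneg [Nontrivial H]
    (hpos : ∀ x : H,
      0 ≤ (inner ℂ (((adjoint A - conj phi • (1 : H →L[ℂ] H)) ∘L
        (Phi • (1 : H →L[ℂ] H) - A)) x) x : ℂ).re) :
    ‖A‖ ^ 2 ≤ ‖Phi + phi‖ * numRadius A - (conj Phi * phi).re := by
  refine opNorm_sq_le_of_unit_norm_sq fun x hx ↦ ?_
  have hx_pos := hpos x
  rw [re_inner_adjoint_sub_comp_sub_apply_self, hx, one_pow, mul_one] at hx_pos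
  have hre : ((Phi + phi) * inner ℂ (A x) x).re ≤ ‖Phi + phi‖ * numRadius A :=
    calc ((Phi + phi) * inner ℂ (A x) x).re ≤ ‖(Phi + phi) * inner ℂ (A x) x‖ :=
          Complex.re_le_norm _
      _ ≤ ‖Phi + phi‖ * numRadius A := by
          rw [norm_mul]; gcongr; exact norm_inner_le_numRadius A hx
  linarith

end PositiveProduct

theorem stmt_19_general {H : Type*} [NormedAddCommGroup H] [InnerProductSpace ℂ H] [CompleteSpace H]
    (A : H →L[ℂ] H) (phi Phi : ℂ) (h1 : Phi ≠ -phi)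
    (hpos : ∀ x : H,
      0 ≤ (inner ℂ (((ContinuousLinearMap.adjoint A - starRingEnd ℂ phi • (1 : H →L[ℂ] H)) ∘L
        (Phi • (1 : H →L[ℂ] H) - A)) x) x : ℂ).re) :
    ‖A‖ - numRadius A ≤ ‖Phi - phi‖ ^ 2 / (4 * ‖Phi + phi‖) := by
  rcases subsingleton_or_nontrivial H with hH | hH
  · have hA : ‖A‖ = 0 := by rw [Subsingleton.elim A 0, norm_zero]
    rw [hA, zero_sub]
    exact (neg_nonpos.2 (numRadius_nonneg A)).trans (by positivity)
  · have hc : 0 < ‖Phi + phi‖ := norm_pos_iff.2 fun h ↦ h1 (eq_neg_of_add_eq_zero_left h)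
    rw [Complex.norm_sub_sq_eq_norm_add_sq_sub]
    exact sub_le_of_sq_le_mul_sub hc
      (opNorm_sq_le_of_re_inner_adjoint_sub_comp_sub_nonneg A phi Phi hpos)

theorem stmt_19 {H : Type*} [NormedAddCommGroup H] [InnerProductSpace ℂ H] [CompleteSpace H]
    (A : H →L[ℂ] H) (phi Phi : ℂ) (h1 : Phi ≠ -phi) (h2 : Phi ≠ phi)
    (hsa : IsSelfAdjoint ((ContinuousLinearMap.adjoint A - starRingEnd ℂ phi • (1 : H →L[ℂ] H)) ∘L
      (Phi • (1 : H →L[ℂ] H) - A)))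
    (hpos : ∀ x : H,
      0 ≤ (inner ℂ (((ContinuousLinearMap.adjoint A - starRingEnd ℂ phi • (1 : H →L[ℂ] H)) ∘L
        (Phi • (1 : H →L[ℂ] H) - A)) x) x : ℂ).re) :
    ‖A‖ - numRadius A ≤ ‖Phi - phi‖ ^ 2 / (4 * ‖Phi + phi‖) :=
  stmt_19_general A phi Phi h1 hpos
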